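/- Soundness of the PiCore rely-guarantee proof system: for every specification ♯ — a program, an event, an event system, or a parallel event system — and all pre, pst ⊆ S and R, G ⊆ S × S, if ⊢ ♯ sat ⟨pre,R,G,pst⟩ is derivable in the proof system, then ⊨ ♯ sat ⟨pre,R,G,pst⟩ holds, i.e., for all initial states s and event contexts x, every computation in Ψ(♯,s,x) ∩ A(pre,R) lies in C(G,pst). -/

import Mathlib

/-!
Validity from a single configuration (`ValidAt`) is a safety property, so it follows from an
invariant of configurations that is preserved by rely steps, whose action steps are guarantee
steps, and whose terminated members satisfy the postcondition (`validAt_of_invariant`). Each rule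
is sound for a suitable invariant: for the sequential constructs (`Seq`, `While`, `EvtSeq`,
`EvtSet`) it says that the running component is itself valid, and for `Par` that every component
is valid for its own rely and guarantee, which survives a step of another component because
`Gs κ ⊆ Rs κ'`. Every action step changes the specification (`PStep.fst_ne` and its analogues),
so an action step is never also an environment step, and validity is inherited along action steps.
-/

set_option autoImplicit false

namespace PiCore

/-! ## Syntax of PiCore -/

/-- PiCore programs; `term` is the terminated program `⊥`. -/
inductive Prog (S : Type) : Type where
  | term : Prog S
  | basic : (S → S) → Prog S
  | seq : Prog S → Prog S → Prog S
  | cond : Set S → Prog S → Prog S → Prog S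
  | while' : Set S → Prog S → Prog S
  | await : Set S → Prog S → Prog S
  | nondt : Set (S × S) → Prog S

/-! ## Small-step semantics of programs -/

mutual
/-- Small-step program semantics `(P, s) -c→ (P', s')`. -/
inductive PStep {S : Type} : Prog S × S → Prog S × S → Prop where
  | basic (f : S → S) (s : S) : PStep (.basic f, s) (.term, f s)
  | seq1 {P₁ : Prog S} {s s' : S} (P₂ : Prog S) :
      PStep (P₁, s) (.term, s') → PStep (.seq P₁ P₂, s) (P₂, s')
  | seq2 {P₁ P₁' : Prog S} {s s' : S} (P₂ : Prog S) :
      PStep (P₁, s) (P₁', s') → P₁' ≠ .term → PStep (.seq P₁ P₂, s) (.seq P₁' P₂, s')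
  | condT {b : Set S} {s : S} (P₁ P₂ : Prog S) : s ∈ b → PStep (.cond b P₁ P₂, s) (P₁, s)
  | condF {b : Set S} {s : S} (P₁ P₂ : Prog S) : s ∉ b → PStep (.cond b P₁ P₂, s) (P₂, s)
  | whileT {b : Set S} {s : S} (P : Prog S) : s ∈ b →
      PStep (.while' b P, s) (.seq P (.while' b P), s)
  | whileF {b : Set S} {s : S} (P : Prog S) : s ∉ b → PStep (.while' b P, s) (.term, s)
  | await {b : Set S} {s s' : S} {P : Prog S} : s ∈ b →
      PStepStar (P, s) (.term, s') → PStep (.await b P, s) (.term, s')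
  | nondt {r : Set (S × S)} {s s' : S} : (s, s') ∈ r → PStep (.nondt r, s) (.term, s')

/-- Reflexive transitive closure of `PStep`. -/
inductive PStepStar {S : Type} : Prog S × S → Prog S × S → Prop where
  | refl (c : Prog S × S) : PStepStar c c
  | step {c c' c'' : Prog S × S} : PStep c c' → PStepStar c' c'' → PStepStar c c''
end

/-! ## Events, event systems, parallel event systems -/

/-- A basic event: a label, a guard and a body. -/
structure EvtSpec (L S : Type) : Type where
  label : L
  guard : Set S
  body : Prog S

/-- Events: basic (non-triggered) events and anonymous (triggered) events. -/
inductive Event (L S : Type) : Type where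
  | basic : EvtSpec L S → Event L S
  | anony : Prog S → Event L S

/-- Event contexts. -/
abbrev EvtCtx (L S K : Type) := K → Event L S

/-- The action component of a transition label: a program action `c`
or the occurrence of an event. -/
inductive Act (L S : Type) : Type where
  | cmd : Act L S
  | evt : Event L S → Act L S

/-- Transition labels `t@κ`. -/
abbrev Lbl (L S K : Type) := Act L S × K

/-- Configurations at the level of events. -/
abbrev EConf (L S K : Type) := Event L S × S × EvtCtx L S K

/-- Labelled transitions of events. -/
inductive EStep {L S K : Type} [DecidableEq K] :
    EConf L S K → Lbl L S K → EConf L S K → Prop where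
  | anony {P P' : Prog S} {s s' : S} (x : EvtCtx L S K) (κ : K) :
      PStep (P, s) (P', s') → EStep (.anony P, s, x) (.cmd, κ) (.anony P', s', x)
  | basic (α : EvtSpec L S) {s : S} (x : EvtCtx L S K) (κ : K) : s ∈ α.guard →
      EStep (.basic α, s, x) (.evt (.basic α), κ)
        (.anony α.body, s, Function.update x κ (.basic α))

/-- Event systems: a finite event set `{ℰ₀, …, ℰₙ}` or a sequence `EvtSeq ℰ 𝒮`. -/
inductive EvtSys (L S : Type) : Type where
  | set : (n : ℕ) → (Fin (n + 1) → Event L S) → EvtSys L S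
  | seq : Event L S → EvtSys L S → EvtSys L S

/-- Configurations at the level of event systems. -/
abbrev ESConf (L S K : Type) := EvtSys L S × S × EvtCtx L S K

/-- Labelled transitions of event systems. -/
inductive ESStep {L S K : Type} [DecidableEq K] :
    ESConf L S K → Lbl L S K → ESConf L S K → Prop where
  | set {n : ℕ} {es : Fin (n + 1) → Event L S} (i : Fin (n + 1))
      {s s' : S} {x x' : EvtCtx L S K} {e' : Event L S} {κ : K} :
      EStep (es i, s, x) (.evt (es i), κ) (e', s', x') →
      ESStep (.set n es, s, x) (.evt (es i), κ) (.seq e' (.set n es), s', x')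
  | seq1 {e e' : Event L S} (𝒮 : EvtSys L S) {s s' : S} {x x' : EvtCtx L S K}
      {l : Lbl L S K} :
      EStep (e, s, x) l (e', s', x') → e' ≠ .anony .term →
      ESStep (.seq e 𝒮, s, x) l (.seq e' 𝒮, s', x')
  | seq2 {e : Event L S} (𝒮 : EvtSys L S) {s s' : S} {x x' : EvtCtx L S K}
      {l : Lbl L S K} :
      EStep (e, s, x) l (.anony .term, s', x') →
      ESStep (.seq e 𝒮, s, x) l (𝒮, s', x')

/-- Parallel event systems. -/
abbrev PES (L S K : Type) := K → EvtSys L S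

/-- Configurations at the level of parallel event systems. -/
abbrev PConf (L S K : Type) := PES L S K × S × EvtCtx L S K

/-- Labelled transitions of parallel event systems. -/
inductive PESStep {L S K : Type} [DecidableEq K] :
    PConf L S K → Lbl L S K → PConf L S K → Prop where
  | par {ps : PES L S K} {κ : K} {t : Act L S} {s s' : S} {x x' : EvtCtx L S K}
      {es' : EvtSys L S} :
      ESStep (ps κ, s, x) (t, κ) (es', s', x') →
      PESStep (ps, s, x) (t, κ) (Function.update ps κ es', s', x')

/-! ## Computations -/

section Computation

variable {σ S X : Type}

/-- An environment transition between two configurations: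
the specification component is unchanged. -/
def EnvTr (c c' : σ × S × X) : Prop := c.1 = c'.1

/-- Computations: nonempty lists of configurations in which every consecutive pair
is an environment transition or an action transition of the semantics. -/
inductive Comp (step : σ × S × X → σ × S × X → Prop) : List (σ × S × X) → Prop where
  | one (c : σ × S × X) : Comp step [c]
  | env {sp : σ} {s₁ s₂ : S} {x₁ x₂ : X} {cs : List (σ × S × X)} :
      Comp step ((sp, s₁, x₁) :: cs) → Comp step ((sp, s₂, x₂) :: (sp, s₁, x₁) :: cs)
  | act {c c' : σ × S × X} {cs : List (σ × S × X)} :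
      step c c' → Comp step (c' :: cs) → Comp step (c :: c' :: cs)

/-- `Ψ(♯, s, x)`: the computations starting in the configuration `(♯, s, x)`. -/
def cpts (step : σ × S × X → σ × S × X → Prop) (sp : σ) (s : S) (x : X) :
    Set (List (σ × S × X)) :=
  {ϖ | Comp step ϖ ∧ ϖ.head? = some (sp, s, x)}

/-- The assumption `A(pre, R)`. -/
def Assum (pre : Set S) (R : Set (S × S)) : Set (List (σ × S × X)) :=
  {ϖ | (∀ c, ϖ.head? = some c → c.2.1 ∈ pre) ∧
    ∀ i c c', ϖ[i]? = some c → ϖ[i + 1]? = some c' → EnvTr c c' →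
      (c.2.1, c'.2.1) ∈ R}

/-- The commitment `C(G, pst)` (`fin` tells when a specification is terminated). -/
def Commit (step : σ × S × X → σ × S × X → Prop) (fin : σ → Prop)
    (G : Set (S × S)) (pst : Set S) : Set (List (σ × S × X)) :=
  {ϖ | (∀ i c c', ϖ[i]? = some c → ϖ[i + 1]? = some c' → step c c' →
      (c.2.1, c'.2.1) ∈ G) ∧
    ∀ c, ϖ.getLast? = some c → fin c.1 → c.2.1 ∈ pst}

end Computation

/-! ## Validity of rely-guarantee specifications -/

section Validity

variable {L S K : Type}

/-- Program action transitions lifted to configurations with a trivial event context. -/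
def pstepL {S : Type} (c c' : Prog S × S × Unit) : Prop :=
  PStep (c.1, c.2.1) (c'.1, c'.2.1)

/-- Action transitions of events (any label). -/
def estepAny [DecidableEq K] (c c' : EConf L S K) : Prop := ∃ l, EStep c l c'

/-- Action transitions of event systems (any label). -/
def esstepAny [DecidableEq K] (c c' : ESConf L S K) : Prop := ∃ l, ESStep c l c'

/-- Action transitions of parallel event systems (any label). -/
def pesstepAny [DecidableEq K] (c c' : PConf L S K) : Prop := ∃ l, PESStep c l c'

/-- A terminated program. -/
def progFin : Prog S → Prop := fun P => P = .term

/-- A terminated event. -/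
def evtFin : Event L S → Prop := fun e => e = .anony .term

/-- Event systems have no terminated form. -/
def esysFin : EvtSys L S → Prop := fun _ => False

/-- Parallel event systems have no terminated form. -/
def pesFin : PES L S K → Prop := fun _ => False

/-- Validity `⊨ P sat ⟨pre, R, G, pst⟩` for programs. -/
def progValid (P : Prog S) (pre : Set S) (R G : Set (S × S)) (pst : Set S) : Prop :=
  ∀ s : S, cpts pstepL P s () ∩ Assum pre R ⊆ Commit pstepL progFin G pst

/-- Validity `⊨ ℰ sat ⟨pre, R, G, pst⟩` for events. -/
def evtValid [DecidableEq K] (e : Event L S) (pre : Set S) (R G : Set (S × S))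
    (pst : Set S) : Prop :=
  ∀ (s : S) (x : EvtCtx L S K),
    cpts estepAny e s x ∩ Assum pre R ⊆ Commit estepAny evtFin G pst

/-- Validity `⊨ 𝒮 sat ⟨pre, R, G, pst⟩` for event systems. -/
def esysValid [DecidableEq K] (es : EvtSys L S) (pre : Set S) (R G : Set (S × S))
    (pst : Set S) : Prop :=
  ∀ (s : S) (x : EvtCtx L S K),
    cpts esstepAny es s x ∩ Assum pre R ⊆ Commit esstepAny esysFin G pst

/-- Validity `⊨ 𝒫𝒮 sat ⟨pre, R, G, pst⟩` for parallel event systems. -/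
def pesValid [DecidableEq K] (ps : PES L S K) (pre : Set S) (R G : Set (S × S))
    (pst : Set S) : Prop :=
  ∀ (s : S) (x : EvtCtx L S K),
    cpts pesstepAny ps s x ∩ Assum pre R ⊆ Commit pesstepAny pesFin G pst

end Validity

/-! ## The rely-guarantee proof system -/

/-- Specifications: programs, events, event systems, or parallel event systems. -/
inductive Spec (L S K : Type) : Type where
  | prog : Prog S → Spec L S K
  | evt : Event L S → Spec L S K
  | esys : EvtSys L S → Spec L S K
  | pes : PES L S K → Spec L S K

/-- A specification that is not a parallel event system. -/
def Spec.noPar {L S K : Type} : Spec L S K → Prop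
  | .pes _ => False
  | _ => True

/-- Uniform validity `⊨ ♯ sat ⟨pre, R, G, pst⟩`. -/
def RGValid {L S K : Type} [DecidableEq K] :
    Spec L S K → Set S → Set (S × S) → Set (S × S) → Set S → Prop
  | .prog P, pre, R, G, pst => progValid P pre R G pst
  | .evt e, pre, R, G, pst => evtValid (K := K) e pre R G pst
  | .esys es, pre, R, G, pst => esysValid (K := K) es pre R G pst
  | .pes ps, pre, R, G, pst => pesValid ps pre R G pst

/-- `stable f g`. -/
def stable {α : Type} (f : Set α) (g : Set (α × α)) : Prop :=
  ∀ x y, x ∈ f → (x, y) ∈ g → y ∈ f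

/-- The identity relation on a state space. -/
def idRel {S : Type} : Set (S × S) := {p | p.1 = p.2}

/-- The rely-guarantee proof system `⊢ ♯ sat ⟨pre, R, G, pst⟩`. -/
inductive RGDeriv {L S K : Type} [DecidableEq K] :
    Spec L S K → Set S → Set (S × S) → Set (S × S) → Set S → Prop where
  | basic {f : S → S} {pre pst : Set S} {R G : Set (S × S)} :
      pre ⊆ {s | f s ∈ pst} →
      {p : S × S | p.1 ∈ pre ∧ p.2 = f p.1} ⊆ G →
      stable pre R → stable pst R →
      RGDeriv (.prog (.basic f)) pre R G pst
  | seq {P Q : Prog S} {pre m pst : Set S} {R G : Set (S × S)} :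
      RGDeriv (.prog P) pre R G m → RGDeriv (.prog Q) m R G pst →
      RGDeriv (.prog (.seq P Q)) pre R G pst
  | cond {b : Set S} {P₁ P₂ : Prog S} {pre pst : Set S} {R G : Set (S × S)} :
      RGDeriv (.prog P₁) (pre ∩ b) R G pst →
      RGDeriv (.prog P₂) (pre ∩ bᶜ) R G pst →
      stable pre R → idRel ⊆ G →
      RGDeriv (.prog (.cond b P₁ P₂)) pre R G pst
  | whileR {b : Set S} {P : Prog S} {pre pst : Set S} {R G : Set (S × S)} :
      RGDeriv (.prog P) (pre ∩ b) R G pre →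
      pre ∩ bᶜ ⊆ pst →
      stable pre R → stable pst R → idRel ⊆ G →
      RGDeriv (.prog (.while' b P)) pre R G pst
  | awaitR {b : Set S} {P : Prog S} {pre pst : Set S} {R G : Set (S × S)} :
      (∀ V : S, RGDeriv (.prog P) (pre ∩ b ∩ {V}) idRel Set.univ
        ({s | (V, s) ∈ G} ∩ pst)) →
      stable pre R → stable pst R →
      RGDeriv (.prog (.await b P)) pre R G pst
  | nondt {r : Set (S × S)} {pre pst : Set S} {R G : Set (S × S)} :
      pre ⊆ {s | (∀ s', (s, s') ∈ r → s' ∈ pst) ∧ ∃ s', (s, s') ∈ r} →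
      {p : S × S | p.1 ∈ pre ∧ p ∈ r} ⊆ G →
      stable pre R → stable pst R →
      RGDeriv (.prog (.nondt r)) pre R G pst
  | conseq {sp : Spec L S K} {pre pre' pst pst' : Set S} {R R' G G' : Set (S × S)} :
      sp.noPar →
      pre ⊆ pre' → R ⊆ R' → G' ⊆ G → pst' ⊆ pst →
      RGDeriv sp pre' R' G' pst' →
      RGDeriv sp pre R G pst
  | unPre {P : Prog S} {pre pre' pst : Set S} {R G : Set (S × S)} :
      RGDeriv (.prog P) pre R G pst → RGDeriv (.prog P) pre' R G pst →
      RGDeriv (.prog P) (pre ∪ pre') R G pst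
  | intPost {P : Prog S} {pre pst pst' : Set S} {R G : Set (S × S)} :
      RGDeriv (.prog P) pre R G pst → RGDeriv (.prog P) pre R G pst' →
      RGDeriv (.prog P) pre R G (pst ∩ pst')
  | univPre {P : Prog S} {pre pst : Set S} {R G : Set (S × S)} :
      (∀ v ∈ pre, RGDeriv (.prog P) {v} R G pst) →
      RGDeriv (.prog P) pre R G pst
  | emptyPre {P : Prog S} {pst : Set S} {R G : Set (S × S)} :
      RGDeriv (.prog P) ∅ R G pst
  | inner {P : Prog S} {pre pst : Set S} {R G : Set (S × S)} :
      RGDeriv (.prog P) pre R G pst →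
      RGDeriv (.evt (.anony P)) pre R G pst
  | basicEvt {α : EvtSpec L S} {pre pst : Set S} {R G : Set (S × S)} :
      RGDeriv (.prog α.body) (pre ∩ α.guard) R G pst →
      stable pre R → idRel ⊆ G →
      RGDeriv (.evt (.basic α)) pre R G pst
  | evtSeq {e : Event L S} {𝒮 : EvtSys L S} {pre m pst : Set S} {R G : Set (S × S)} :
      RGDeriv (.evt e) pre R G m → RGDeriv (.esys 𝒮) m R G pst →
      RGDeriv (.esys (.seq e 𝒮)) pre R G pst
  | evtSet {n : ℕ} {es : Fin (n + 1) → Event L S} {pre pst : Set S}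
      {R G : Set (S × S)} {pres psts : Fin (n + 1) → Set S}
      {Rs Gs : Fin (n + 1) → Set (S × S)} :
      (∀ i, RGDeriv (.evt (es i)) (pres i) (Rs i) (Gs i) (psts i)) →
      (∀ i j, psts i ⊆ pres j) →
      (∀ i, pre ⊆ pres i) → (∀ i, psts i ⊆ pst) →
      (∀ i, R ⊆ Rs i) → (∀ i, Gs i ⊆ G) →
      stable pre R → idRel ⊆ G →
      RGDeriv (.esys (.set n es)) pre R G pst
  | par {ps : PES L S K} {pre pst : Set S} {R G : Set (S × S)}
      {pres psts : K → Set S} {Rs Gs : K → Set (S × S)} :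
      (∀ κ, RGDeriv (.esys (ps κ)) (pres κ) (Rs κ) (Gs κ) (psts κ)) →
      (∀ κ, pre ⊆ pres κ) → (∀ κ, psts κ ⊆ pst) →
      (∀ κ, Gs κ ⊆ G) → (∀ κ, R ⊆ Rs κ) →
      (∀ κ κ', κ ≠ κ' → Gs κ ⊆ Rs κ') →
      RGDeriv (.pes ps) pre R G pst


/-! ## Serialization and compositionality machinery -/

/-- The set of events occurring syntactically in an event system. -/
def EvtSys.evts {L S : Type} : EvtSys L S → Set (Event L S)
  | .set _ es => Set.range es
  | .seq e 𝒮 => insert e 𝒮.evts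

/-- Similarity (simulation) of two computations, possibly over different
specification types: same length, and at each position the states and event
contexts coincide and the steps are the same labelled action transitions
(resp. environment transitions). -/
def Similar {σ₁ σ₂ S X Λ : Type}
    (st₁ : σ₁ × S × X → Λ → σ₁ × S × X → Prop)
    (st₂ : σ₂ × S × X → Λ → σ₂ × S × X → Prop)
    (w₁ : List (σ₁ × S × X)) (w₂ : List (σ₂ × S × X)) : Prop :=
  w₁.length = w₂.length ∧
  ∀ i c₁ c₁' c₂ c₂', w₁[i]? = some c₁ → w₁[i + 1]? = some c₁' →
    w₂[i]? = some c₂ → w₂[i + 1]? = some c₂' →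
    c₁.2.1 = c₂.2.1 ∧ c₁.2.2 = c₂.2.2 ∧
    (∀ δ, st₁ c₁ δ c₁' ↔ st₂ c₂ δ c₂') ∧
    (EnvTr c₁ c₁' ↔ EnvTr c₂ c₂')

/-- The computations of an event (from an arbitrary initial state and
event context). -/
def cptsOfEvt {L S K : Type} [DecidableEq K] (e : Event L S) :
    Set (List (EConf L S K)) :=
  {w | Comp estepAny w ∧ ∃ s x, w.head? = some (e, s, x)}

/-- A computation `w` of a parallel event system and a family `cf` of
computations of event systems conjoin, `w ∝ cf` (Definition 2). -/
def Conjoin {L S K : Type} [DecidableEq K] (w : List (PConf L S K))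
    (cf : K → List (ESConf L S K)) : Prop :=
  (∀ κ, (cf κ).length = w.length) ∧
  (∀ (κ : K) (j : ℕ) c c', w[j]? = some c → (cf κ)[j]? = some c' →
    c.2.1 = c'.2.1 ∧ c.2.2 = c'.2.2 ∧ c.1 κ = c'.1) ∧
  (∀ (j : ℕ) c c', w[j]? = some c → w[j + 1]? = some c' →
    (EnvTr c c' ∧
      ∀ κ d d', (cf κ)[j]? = some d → (cf κ)[j + 1]? = some d' → EnvTr d d') ∨
    (∃ (t : Act L S) (κ₁ : K), PESStep c (t, κ₁) c' ∧
      (∀ d d', (cf κ₁)[j]? = some d → (cf κ₁)[j + 1]? = some d' →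
        ESStep d (t, κ₁) d') ∧
      (∀ κ, κ ≠ κ₁ → ∀ d d', (cf κ)[j]? = some d → (cf κ)[j + 1]? = some d' →
        EnvTr d d')))


section NonStuttering

variable {L S K : Type}

theorem Prog.seq_ne_right (P₁ P₂ : Prog S) : Prog.seq P₁ P₂ ≠ P₂ :=
  fun h => by have := congrArg sizeOf h; grind

theorem Prog.cond_ne_left (b : Set S) (P₁ P₂ : Prog S) : Prog.cond b P₁ P₂ ≠ P₁ :=
  fun h => by have := congrArg sizeOf h; grind

theorem Prog.cond_ne_right (b : Set S) (P₁ P₂ : Prog S) : Prog.cond b P₁ P₂ ≠ P₂ :=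
  fun h => by have := congrArg sizeOf h; grind

theorem EvtSys.seq_ne (e : Event L S) (𝒮 : EvtSys L S) : EvtSys.seq e 𝒮 ≠ 𝒮 :=
  fun h => by have := congrArg sizeOf h; grind

theorem PStep.fst_ne : ∀ {c c' : Prog S × S}, PStep c c' → c.1 ≠ c'.1
  | _, _, .seq1 _ _ => Prog.seq_ne_right _ _
  | _, _, .seq2 _ h _ => fun e => h.fst_ne (Prog.seq.inj e).1
  | _, _, .condT .. => Prog.cond_ne_left _ _ _
  | _, _, .condF .. => Prog.cond_ne_right _ _ _
  | _, _, .basic .. | _, _, .whileT .. | _, _, .whileF .. | _, _, .await .. | _, _, .nondt .. =>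
    nofun

variable [DecidableEq K]

theorem EStep.fst_ne {c c' : EConf L S K} {l : Lbl L S K} : EStep c l c' → c.1 ≠ c'.1
  | .anony _ _ h => fun e => h.fst_ne (Event.anony.inj e)
  | .basic .. => nofun

theorem ESStep.fst_ne {c c' : ESConf L S K} {l : Lbl L S K} : ESStep c l c' → c.1 ≠ c'.1
  | .set .. => nofun
  | .seq1 _ h _ => fun e => h.fst_ne (EvtSys.seq.inj e).1
  | .seq2 _ _ => EvtSys.seq_ne _ _

end NonStuttering

section Computation

variable {σ S X : Type} {stp : σ × S × X → σ × S × X → Prop} {fin : σ → Prop}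
  {pre pre' pst pst' : Set S} {R R' G G' : Set (S × S)}

theorem forall_getElem?_succ_iff_isChain {α : Type} {r : α → α → Prop} {w : List α} :
    (∀ i a b, w[i]? = some a → w[i + 1]? = some b → r a b) ↔ w.IsChain r := by
  rw [List.isChain_iff_getElem]
  refine ⟨fun h i hi => h i _ _ (List.getElem?_eq_getElem _) (List.getElem?_eq_getElem hi),
    fun h i a b ha hb => ?_⟩
  obtain ⟨hi, rfl⟩ := List.getElem?_eq_some_iff.1 hb
  obtain ⟨-, rfl⟩ := List.getElem?_eq_some_iff.1 ha
  exact h i hi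

theorem mem_assum_univ_iff {w : List (σ × S × X)} :
    w ∈ Assum Set.univ R ↔ w.IsChain fun c c' => EnvTr c c' → (c.2.1, c'.2.1) ∈ R := by
  simp [Assum, ← forall_getElem?_succ_iff_isChain]

theorem mem_commit_iff {w : List (σ × S × X)} :
    w ∈ Commit stp fin G pst ↔ w.IsChain (fun c c' => stp c c' → (c.2.1, c'.2.1) ∈ G) ∧
      ∀ c, w.getLast? = some c → fin c.1 → c.2.1 ∈ pst := by
  simp [Commit, ← forall_getElem?_succ_iff_isChain]

theorem cons_cons_mem_assum_univ_iff {c c' : σ × S × X} {w : List (σ × S × X)} :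
    c :: c' :: w ∈ Assum Set.univ R ↔
      (EnvTr c c' → (c.2.1, c'.2.1) ∈ R) ∧ c' :: w ∈ Assum Set.univ R := by
  simp only [mem_assum_univ_iff, List.isChain_cons_cons]

theorem cons_cons_mem_commit_iff {c c' : σ × S × X} {w : List (σ × S × X)} :
    c :: c' :: w ∈ Commit stp fin G pst ↔
      (stp c c' → (c.2.1, c'.2.1) ∈ G) ∧ c' :: w ∈ Commit stp fin G pst := by
  simp only [mem_commit_iff, List.isChain_cons_cons, List.getLast?_cons_cons, and_assoc]

theorem singleton_mem_commit_iff {c : σ × S × X} :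
    [c] ∈ Commit stp fin G pst ↔ (fin c.1 → c.2.1 ∈ pst) := by
  simp [mem_commit_iff]

theorem assum_mono (hpre : pre ⊆ pre') (hR : R ⊆ R') :
    (Assum pre R : Set (List (σ × S × X))) ⊆ Assum pre' R' :=
  fun _ ⟨h₁, h₂⟩ =>
    ⟨fun c hc => hpre (h₁ c hc), fun i c c' hi hi' he => hR (h₂ i c c' hi hi' he)⟩

theorem commit_mono (hG : G' ⊆ G) (hpst : pst' ⊆ pst) :
    Commit stp fin G' pst' ⊆ Commit stp fin G pst :=
  fun _ ⟨h₁, h₂⟩ =>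
    ⟨fun i c c' hi hi' hs => hG (h₁ i c c' hi hi' hs), fun c hc hf => hpst (h₂ c hc hf)⟩

theorem commit_inter :
    Commit stp fin G (pst ∩ pst') = Commit stp fin G pst ∩ Commit stp fin G pst' := by
  ext w
  simp only [Set.mem_inter_iff, mem_commit_iff, imp_and, forall_and]
  tauto

end Computation

section ValidAt

variable {σ S X : Type} {stp : σ × S × X → σ × S × X → Prop} {fin : σ → Prop}
  {pre pst : Set S} {R G : Set (S × S)}

def ValidAt (stp : σ × S × X → σ × S × X → Prop) (fin : σ → Prop) (R G : Set (S × S))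
    (pst : Set S) (c : σ × S × X) : Prop :=
  ∀ w, Comp stp w → w.head? = some c → w ∈ Assum Set.univ R → w ∈ Commit stp fin G pst

theorem cpts_inter_assum_subset_commit_iff {sp : σ} {s : S} {x : X} :
    cpts stp sp s x ∩ Assum pre R ⊆ Commit stp fin G pst ↔
      (s ∈ pre → ValidAt stp fin R G pst (sp, s, x)) := by
  refine ⟨fun h hs w hw hhead hA => h ⟨⟨hw, hhead⟩, ?_, hA.2⟩, ?_⟩
  · intro c hc
    obtain rfl := Option.some.inj (hc.symm.trans hhead)
    exact hs
  · rintro h w ⟨⟨hw, hhead⟩, hpre, hR⟩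
    exact h (hpre _ hhead) w hw hhead ⟨fun _ _ => trivial, hR⟩

namespace ValidAt

variable {c c' : σ × S × X}

theorem of_cons (h : ValidAt stp fin R G pst c)
    (hcomp : ∀ w, Comp stp (c' :: w) → Comp stp (c :: c' :: w))
    (hR : EnvTr c c' → (c.2.1, c'.2.1) ∈ R) :
    ValidAt stp fin R G pst c' ∧ (stp c c' → (c.2.1, c'.2.1) ∈ G) := by
  have hcons : ∀ w, Comp stp (c' :: w) → c' :: w ∈ Assum Set.univ R →
      c :: c' :: w ∈ Commit stp fin G pst := fun w hw hA =>
    h _ (hcomp w hw) rfl (cons_cons_mem_assum_univ_iff.2 ⟨hR, hA⟩)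
  refine ⟨?_, fun hs => ?_⟩
  · rintro (_ | ⟨d, w⟩) hw hhead hA
    · cases hhead
    obtain rfl := Option.some.inj hhead
    exact (cons_cons_mem_commit_iff.1 (hcons w hw hA)).2
  · have := hcons [] (Comp.one c') (by simp [mem_assum_univ_iff])
    exact (cons_cons_mem_commit_iff.1 this).1 hs

theorem env (h : ValidAt stp fin R G pst c) {s' : S} {x' : X} (hR : (c.2.1, s') ∈ R) :
    ValidAt stp fin R G pst (c.1, s', x') :=
  (h.of_cons (fun _ => Comp.env) fun _ => hR).1

theorem step (h : ValidAt stp fin R G pst c) (hs : stp c c') (hne : c.1 ≠ c'.1) :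
    (c.2.1, c'.2.1) ∈ G ∧ ValidAt stp fin R G pst c' :=
  (h.of_cons (fun _ => Comp.act hs) fun he => absurd he hne).symm.imp_left (· hs)

theorem post (h : ValidAt stp fin R G pst c) (hfin : fin c.1) : c.2.1 ∈ pst :=
  singleton_mem_commit_iff.1 (h [c] (Comp.one c) rfl (by simp [mem_assum_univ_iff])) hfin

end ValidAt

theorem validAt_of_invariant (Inv : σ × S × X → Prop)
    (henv : ∀ c s' x', Inv c → (c.2.1, s') ∈ R → Inv (c.1, s', x'))
    (hact : ∀ c c', Inv c → stp c c' → (c.2.1, c'.2.1) ∈ G ∧ Inv c')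
    (hpost : ∀ c, Inv c → fin c.1 → c.2.1 ∈ pst) {c : σ × S × X} (hc : Inv c) :
    ValidAt stp fin R G pst c := by
  intro w hw
  induction hw generalizing c with
  | one d =>
    rintro ⟨⟩ -
    exact singleton_mem_commit_iff.2 (hpost _ hc)
  | env _ ih =>
    rintro ⟨⟩ hA
    rw [cons_cons_mem_assum_univ_iff] at hA
    exact cons_cons_mem_commit_iff.2
      ⟨fun hs => (hact _ _ hc hs).1, ih (henv _ _ _ hc (hA.1 rfl)) rfl hA.2⟩
  | act hs _ ih =>
    rintro ⟨⟩ hA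
    obtain ⟨hG, hc'⟩ := hact _ _ hc hs
    rw [cons_cons_mem_assum_univ_iff] at hA
    exact cons_cons_mem_commit_iff.2 ⟨fun _ => hG, ih hc' rfl hA.2⟩

theorem validAt_of_invariant_or_validAt (Inv : σ × S × X → Prop)
    (hne : ∀ c c', stp c c' → c.1 ≠ c'.1)
    (henv : ∀ c s' x', Inv c → (c.2.1, s') ∈ R → Inv (c.1, s', x'))
    (hact : ∀ c c', Inv c → stp c c' →
      (c.2.1, c'.2.1) ∈ G ∧ (Inv c' ∨ ValidAt stp fin R G pst c'))
    (hpost : ∀ c, Inv c → fin c.1 → c.2.1 ∈ pst) {c : σ × S × X} (hc : Inv c) :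
    ValidAt stp fin R G pst c :=
  validAt_of_invariant (fun c => Inv c ∨ ValidAt stp fin R G pst c)
    (fun c _ _ hc hR => hc.imp (henv c _ _ · hR) (·.env hR))
    (fun c c' hc hs => hc.elim (hact c c' · hs)
      fun h => (h.step hs (hne c c' hs)).imp_right Or.inr)
    (fun c hc hf => hc.elim (hpost c · hf) (·.post hf))
    (Or.inl hc)

theorem validAt_of_forall_step (hne : ∀ c c', stp c c' → c.1 ≠ c'.1) {sp : σ}
    (hst : stable pre R) (hfin : ¬ fin sp)
    (hact : ∀ s x c', s ∈ pre → stp (sp, s, x) c' →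
      (s, c'.2.1) ∈ G ∧ ValidAt stp fin R G pst c')
    {s : S} {x : X} (hs : s ∈ pre) : ValidAt stp fin R G pst (sp, s, x) :=
  validAt_of_invariant_or_validAt (fun c => c.1 = sp ∧ c.2.1 ∈ pre) hne
    (fun _ _ _ ⟨hc, hs⟩ hR => ⟨hc, hst _ _ hs hR⟩)
    (fun ⟨_, s, x⟩ c' ⟨hc, hs⟩ h => by subst hc; exact (hact s x c' hs h).imp_right Or.inr)
    (fun _ ⟨hc, _⟩ hf => absurd (hc ▸ hf) hfin)
    ⟨rfl, hs⟩

end ValidAt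

section Validity

variable {L S K : Type} {pre pre' pst pst' : Set S} {R R' G G' : Set (S × S)}

theorem progValid_iff {P : Prog S} :
    progValid P pre R G pst ↔ ∀ s ∈ pre, ValidAt pstepL progFin R G pst (P, s, ()) :=
  forall_congr' fun _ => cpts_inter_assum_subset_commit_iff

variable [DecidableEq K]

theorem evtValid_iff {e : Event L S} :
    evtValid (K := K) e pre R G pst ↔
      ∀ s (x : EvtCtx L S K), s ∈ pre → ValidAt estepAny evtFin R G pst (e, s, x) :=
  forall₂_congr fun _ _ => cpts_inter_assum_subset_commit_iff

theorem esysValid_iff {𝒮 : EvtSys L S} :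
    esysValid (K := K) 𝒮 pre R G pst ↔
      ∀ s (x : EvtCtx L S K), s ∈ pre → ValidAt esstepAny esysFin R G pst (𝒮, s, x) :=
  forall₂_congr fun _ _ => cpts_inter_assum_subset_commit_iff

theorem pesValid_iff {ps : PES L S K} :
    pesValid ps pre R G pst ↔
      ∀ s x, s ∈ pre → ValidAt pesstepAny pesFin R G pst (ps, s, x) :=
  forall₂_congr fun _ _ => cpts_inter_assum_subset_commit_iff

theorem inter_assum_subset_commit_mono {σ X : Type} {stp : σ × S × X → σ × S × X → Prop}
    {fin : σ → Prop} {A : Set (List (σ × S × X))}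
    (h : A ∩ Assum pre' R' ⊆ Commit stp fin G' pst')
    (hpre : pre ⊆ pre') (hR : R ⊆ R') (hG : G' ⊆ G) (hpst : pst' ⊆ pst) :
    A ∩ Assum pre R ⊆ Commit stp fin G pst :=
  fun _ hw => commit_mono hG hpst (h ⟨hw.1, assum_mono hpre hR hw.2⟩)

theorem RGValid.mono {sp : Spec L S K} (h : RGValid sp pre' R' G' pst')
    (hpre : pre ⊆ pre') (hR : R ⊆ R') (hG : G' ⊆ G) (hpst : pst' ⊆ pst) :
    RGValid sp pre R G pst := by
  cases sp
  case prog => exact fun s => inter_assum_subset_commit_mono (h s) hpre hR hG hpst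
  all_goals exact fun s x => inter_assum_subset_commit_mono (h s x) hpre hR hG hpst

end Validity

section ProgramRules

variable {S : Type} {pre pre' m pst pst' : Set S} {R G : Set (S × S)}

theorem pstepL_fst_ne (c c' : Prog S × S × Unit) (h : pstepL c c') : c.1 ≠ c'.1 :=
  PStep.fst_ne h

theorem PStep.toPstepL {P P' : Prog S} {s s' : S} (h : PStep (P, s) (P', s')) :
    pstepL (P, s, ()) (P', s', ()) :=
  h

theorem validAt_term (hst : stable pst R) {s : S} (hs : s ∈ pst) :
    ValidAt pstepL progFin R G pst (.term, s, ()) :=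
  validAt_of_invariant (fun c => c.1 = .term ∧ c.2.1 ∈ pst)
    (fun _ _ _ ⟨hc, hs⟩ hR => ⟨hc, hst _ _ hs hR⟩)
    (fun ⟨_, _, _⟩ _ ⟨hc, _⟩ h => by subst hc; nomatch h)
    (fun _ h _ => h.2) ⟨rfl, hs⟩

theorem ValidAt.of_pStepStar {fin : Prog S → Prop} :
    ∀ {c c' : Prog S × S}, PStepStar c c' →
      ValidAt pstepL fin R G pst (c.1, c.2, ()) → ValidAt pstepL fin R G pst (c'.1, c'.2, ())
  | _, _, .refl _, h => h
  | (_, _), _, .step (c' := (_, _)) h₁ h₂, h =>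
    of_pStepStar h₂ (h.step h₁.toPstepL h₁.fst_ne).2

theorem ValidAt.seq_step {P₁ P' Q : Prog S} {s s' : S}
    (h : ValidAt pstepL progFin R G m (P₁, s, ())) (hs : PStep (.seq P₁ Q, s) (P', s')) :
    (s, s') ∈ G ∧ ((P' = Q ∧ s' ∈ m) ∨
      ∃ P₁', P' = .seq P₁' Q ∧ ValidAt pstepL progFin R G m (P₁', s', ())) := by
  cases hs with
  | seq1 _ hs =>
    obtain ⟨hG, h'⟩ := h.step hs.toPstepL hs.fst_ne
    exact ⟨hG, Or.inl ⟨rfl, h'.post rfl⟩⟩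
  | seq2 _ hs _ =>
    obtain ⟨hG, h'⟩ := h.step hs.toPstepL hs.fst_ne
    exact ⟨hG, Or.inr ⟨_, rfl, h'⟩⟩

theorem progValid_of_forall_step {P : Prog S} (hpre : stable pre R) (hP : P ≠ .term)
    (hact : ∀ s P' s', s ∈ pre → PStep (P, s) (P', s') →
      (s, s') ∈ G ∧ ValidAt pstepL progFin R G pst (P', s', ())) :
    progValid P pre R G pst :=
  progValid_iff.2 fun _ => validAt_of_forall_step (sp := P) pstepL_fst_ne hpre hP
    fun s _ ⟨P', s', ()⟩ hs h => hact s P' s' hs h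

theorem progValid_basic {f : S → S} (hpst : pre ⊆ {s | f s ∈ pst})
    (hG : {p : S × S | p.1 ∈ pre ∧ p.2 = f p.1} ⊆ G)
    (hpre : stable pre R) (hpst' : stable pst R) :
    progValid (.basic f) pre R G pst :=
  progValid_of_forall_step hpre nofun
    fun _ _ _ hs (.basic ..) => ⟨hG ⟨hs, rfl⟩, validAt_term hpst' (hpst hs)⟩

theorem progValid_nondt {r : Set (S × S)}
    (hpst : pre ⊆ {s | (∀ s', (s, s') ∈ r → s' ∈ pst) ∧ ∃ s', (s, s') ∈ r})
    (hG : {p : S × S | p.1 ∈ pre ∧ p ∈ r} ⊆ G)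
    (hpre : stable pre R) (hpst' : stable pst R) :
    progValid (.nondt r) pre R G pst :=
  progValid_of_forall_step hpre nofun
    fun _ _ _ hs (.nondt hr) => ⟨hG ⟨hs, hr⟩, validAt_term hpst' ((hpst hs).1 _ hr)⟩

theorem progValid_cond {b : Set S} {P₁ P₂ : Prog S}
    (h₁ : progValid P₁ (pre ∩ b) R G pst) (h₂ : progValid P₂ (pre ∩ bᶜ) R G pst)
    (hpre : stable pre R) (hid : idRel ⊆ G) :
    progValid (.cond b P₁ P₂) pre R G pst :=
  progValid_of_forall_step hpre nofun fun
    | s, _, _, hs, .condT _ _ hb => ⟨hid rfl, progValid_iff.1 h₁ s ⟨hs, hb⟩⟩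
    | s, _, _, hs, .condF _ _ hb => ⟨hid rfl, progValid_iff.1 h₂ s ⟨hs, hb⟩⟩

theorem progValid_await {b : Set S} {P : Prog S}
    (hP : ∀ V, progValid P (pre ∩ b ∩ {V}) idRel Set.univ ({s | (V, s) ∈ G} ∩ pst))
    (hpre : stable pre R) (hpst : stable pst R) :
    progValid (.await b P) pre R G pst :=
  progValid_of_forall_step hpre nofun fun s _ _ hs (.await hb hP') =>
    have hfinal := ((progValid_iff.1 (hP s) s ⟨⟨hs, hb⟩, rfl⟩).of_pStepStar hP').post rfl
    ⟨hfinal.1, validAt_term hpst hfinal.2⟩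

theorem progValid_seq {P Q : Prog S} (hP : progValid P pre R G m) (hQ : progValid Q m R G pst) :
    progValid (.seq P Q) pre R G pst := by
  refine progValid_iff.2 fun s hs => validAt_of_invariant_or_validAt
    (fun c => ∃ P₁, c.1 = .seq P₁ Q ∧ ValidAt pstepL progFin R G m (P₁, c.2))
    pstepL_fst_ne ?_ ?_ ?_ ⟨P, rfl, progValid_iff.1 hP s hs⟩
  · exact fun _ _ _ ⟨P₁, hc, h⟩ hR => ⟨P₁, hc, h.env hR⟩
  · rintro ⟨_, s, ⟨⟩⟩ ⟨P', s', ⟨⟩⟩ ⟨P₁, rfl, h⟩ hs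
    obtain ⟨hG, ⟨rfl, hm⟩ | ⟨P₁', rfl, h'⟩⟩ := h.seq_step hs
    exacts [⟨hG, Or.inr (progValid_iff.1 hQ s' hm)⟩, ⟨hG, Or.inl ⟨P₁', rfl, h'⟩⟩]
  · rintro c ⟨P₁, hc, -⟩ hfin
    cases hc.symm.trans hfin

theorem progValid_while {b : Set S} {P : Prog S} (hP : progValid P (pre ∩ b) R G pre)
    (hpst : pre ∩ bᶜ ⊆ pst) (hpre : stable pre R) (hpst' : stable pst R)
    (hid : idRel ⊆ G) :
    progValid (.while' b P) pre R G pst := by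
  refine progValid_iff.2 fun s hs => validAt_of_invariant_or_validAt
    (fun c => (c.1 = .while' b P ∧ c.2.1 ∈ pre) ∨
      ∃ P₁, c.1 = .seq P₁ (.while' b P) ∧ ValidAt pstepL progFin R G pre (P₁, c.2))
    pstepL_fst_ne ?_ ?_ ?_ (Or.inl ⟨rfl, hs⟩)
  · exact fun _ _ _ hc hR => hc.imp (fun ⟨hc, hs⟩ => ⟨hc, hpre _ _ hs hR⟩)
      fun ⟨P₁, hc, h⟩ => ⟨P₁, hc, h.env hR⟩
  · rintro ⟨_, s, ⟨⟩⟩ ⟨P', s', ⟨⟩⟩ (⟨rfl, hs⟩ | ⟨P₁, rfl, h⟩) hstep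
    · cases hstep with
      | whileT _ hb =>
        exact ⟨hid rfl, Or.inl (Or.inr ⟨P, rfl, progValid_iff.1 hP s ⟨hs, hb⟩⟩)⟩
      | whileF _ hb => exact ⟨hid rfl, Or.inr (validAt_term hpst' (hpst ⟨hs, hb⟩))⟩
    · obtain ⟨hG, ⟨rfl, hm⟩ | ⟨P₁', rfl, h'⟩⟩ := h.seq_step hstep
      exacts [⟨hG, Or.inl (Or.inl ⟨rfl, hm⟩)⟩,
        ⟨hG, Or.inl (Or.inr ⟨P₁', rfl, h'⟩)⟩]
  · rintro c (⟨hc, -⟩ | ⟨P₁, hc, -⟩) hfin <;> cases hc.symm.trans hfin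

theorem progValid_union {P : Prog S} (h : progValid P pre R G pst)
    (h' : progValid P pre' R G pst) : progValid P (pre ∪ pre') R G pst :=
  progValid_iff.2 fun s hs => hs.elim (progValid_iff.1 h s) (progValid_iff.1 h' s)

theorem progValid_inter {P : Prog S} (h : progValid P pre R G pst)
    (h' : progValid P pre R G pst') : progValid P pre R G (pst ∩ pst') :=
  fun s => commit_inter ▸ Set.subset_inter (h s) (h' s)

theorem progValid_of_forall_singleton {P : Prog S} (h : ∀ v ∈ pre, progValid P {v} R G pst) :
    progValid P pre R G pst :=
  progValid_iff.2 fun s hs => progValid_iff.1 (h s hs) s rfl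

theorem progValid_empty {P : Prog S} : progValid P ∅ R G pst :=
  progValid_iff.2 fun _ => False.elim

end ProgramRules

section EventRules

variable {L S K : Type} [DecidableEq K] {pre m pst : Set S} {R G : Set (S × S)}

theorem estepAny_fst_ne (c c' : EConf L S K) : estepAny c c' → c.1 ≠ c'.1
  | ⟨_, h⟩ => h.fst_ne

theorem esstepAny_fst_ne (c c' : ESConf L S K) : esstepAny c c' → c.1 ≠ c'.1
  | ⟨_, h⟩ => h.fst_ne

theorem ValidAt.anony {P : Prog S} {s : S} (h : ValidAt pstepL progFin R G pst (P, s, ()))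
    (x : EvtCtx L S K) : ValidAt estepAny evtFin R G pst (.anony P, s, x) :=
  validAt_of_invariant
    (fun c => ∃ P, c.1 = .anony P ∧ ValidAt pstepL progFin R G pst (P, c.2.1, ()))
    (fun _ _ _ ⟨P, hc, h⟩ hR => ⟨P, hc, h.env hR⟩)
    (fun ⟨_, _, _⟩ ⟨_, _, _⟩ ⟨P, hc, h⟩ ⟨_, hs⟩ => by
      subst hc
      cases hs with
      | anony _ _ hs => exact (h.step hs.toPstepL hs.fst_ne).imp_right fun h' => ⟨_, rfl, h'⟩)
    (fun _ ⟨P, hc, h⟩ hfin => by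
      obtain rfl := Event.anony.inj (hc.symm.trans hfin)
      exact h.post rfl)
    ⟨P, rfl, h⟩

theorem evtValid_anony {P : Prog S} (h : progValid P pre R G pst) :
    evtValid (K := K) (.anony P : Event L S) pre R G pst :=
  evtValid_iff.2 fun s x hs => (progValid_iff.1 h s hs).anony x

theorem evtValid_basic {α : EvtSpec L S} (h : progValid α.body (pre ∩ α.guard) R G pst)
    (hpre : stable pre R) (hid : idRel ⊆ G) :
    evtValid (K := K) (.basic α) pre R G pst :=
  evtValid_iff.2 fun _ _ => validAt_of_forall_step (sp := .basic α) estepAny_fst_ne hpre nofun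
    fun s _ _ hs ⟨_, hstep⟩ => by
      cases hstep with
      | basic _ _ _ hg => exact ⟨hid rfl, (progValid_iff.1 h s ⟨hs, hg⟩).anony _⟩

theorem ValidAt.evtSeq_step {e : Event L S} {𝒮 𝒮' : EvtSys L S} {s s' : S}
    {x x' : EvtCtx L S K} {l : Lbl L S K}
    (h : ValidAt estepAny evtFin R G m (e, s, x))
    (hs : ESStep (.seq e 𝒮, s, x) l (𝒮', s', x')) :
    (s, s') ∈ G ∧ ((𝒮' = 𝒮 ∧ s' ∈ m) ∨
      ∃ e', 𝒮' = .seq e' 𝒮 ∧ ValidAt estepAny evtFin R G m (e', s', x')) := by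
  cases hs with
  | seq1 _ hs _ =>
    obtain ⟨hG, h'⟩ := h.step ⟨_, hs⟩ hs.fst_ne
    exact ⟨hG, Or.inr ⟨_, rfl, h'⟩⟩
  | seq2 _ hs =>
    obtain ⟨hG, h'⟩ := h.step ⟨_, hs⟩ hs.fst_ne
    exact ⟨hG, Or.inl ⟨rfl, h'.post rfl⟩⟩

theorem esysValid_seq {e : Event L S} {𝒮 : EvtSys L S} (he : evtValid (K := K) e pre R G m)
    (h𝒮 : esysValid (K := K) 𝒮 m R G pst) :
    esysValid (K := K) (.seq e 𝒮) pre R G pst := by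
  refine esysValid_iff.2 fun s x hs => validAt_of_invariant_or_validAt
    (fun c => ∃ e, c.1 = .seq e 𝒮 ∧ ValidAt estepAny evtFin R G m (e, c.2))
    esstepAny_fst_ne ?_ ?_ (fun _ _ => False.elim) ⟨e, rfl, evtValid_iff.1 he s x hs⟩
  · exact fun _ _ _ ⟨e, hc, h⟩ hR => ⟨e, hc, h.env hR⟩
  · rintro ⟨_, s, x⟩ ⟨𝒮', s', x'⟩ ⟨e, rfl, h⟩ ⟨_, hs⟩
    obtain ⟨hG, ⟨rfl, hm⟩ | ⟨e', rfl, h'⟩⟩ := h.evtSeq_step hs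
    exacts [⟨hG, Or.inr (esysValid_iff.1 h𝒮 s' x' hm)⟩, ⟨hG, Or.inl ⟨e', rfl, h'⟩⟩]

theorem esysValid_set {n : ℕ} {es : Fin (n + 1) → Event L S}
    {pres psts : Fin (n + 1) → Set S} {Rs Gs : Fin (n + 1) → Set (S × S)}
    (hes : ∀ i, evtValid (K := K) (es i) (pres i) (Rs i) (Gs i) (psts i))
    (hpsts : ∀ i j, psts i ⊆ pres j) (hpre : ∀ i, pre ⊆ pres i)
    (hR : ∀ i, R ⊆ Rs i) (hG : ∀ i, Gs i ⊆ G) :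
    esysValid (K := K) (.set n es) pre R G pst := by
  have hstart : ∀ s x i, s ∈ pres i →
      ValidAt estepAny evtFin (Rs i) (Gs i) (psts i) (es i, s, x) :=
    fun s x i => evtValid_iff.1 (hes i) s x
  -- At the event set the invariant keeps every event valid rather than `c.2.1 ∈ pres i`,
  -- which need not be stable under `R`.
  refine esysValid_iff.2 fun s x hs => validAt_of_invariant
    (fun c => (c.1 = .set n es ∧
        ∀ i, ValidAt estepAny evtFin (Rs i) (Gs i) (psts i) (es i, c.2)) ∨
      ∃ i e, c.1 = .seq e (.set n es) ∧ ValidAt estepAny evtFin (Rs i) (Gs i) (psts i) (e, c.2))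
    ?_ ?_ (fun _ _ => False.elim) (Or.inl ⟨rfl, fun i => hstart s x i (hpre i hs)⟩)
  · exact fun _ _ _ hc hR' => hc.imp (fun ⟨hc, h⟩ => ⟨hc, fun i => (h i).env (hR i hR')⟩)
      fun ⟨i, e, hc, h⟩ => ⟨i, e, hc, h.env (hR i hR')⟩
  · rintro ⟨_, s, x⟩ ⟨𝒮', s', x'⟩ (⟨rfl, h⟩ | ⟨i, e, rfl, h⟩) ⟨_, hs⟩
    · cases hs with
      | set i hs =>
        obtain ⟨hGi, h'⟩ := (h i).step ⟨_, hs⟩ hs.fst_ne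
        exact ⟨hG i hGi, Or.inr ⟨i, _, rfl, h'⟩⟩
    · obtain ⟨hG', ⟨rfl, hm⟩ | ⟨e', rfl, h'⟩⟩ := h.evtSeq_step hs
      exacts [⟨hG i hG', Or.inl ⟨rfl, fun j => hstart s' x' j (hpsts i j hm)⟩⟩,
        ⟨hG i hG', Or.inr ⟨i, e', rfl, h'⟩⟩]

theorem pesValid_par {ps : PES L S K} {pres psts : K → Set S} {Rs Gs : K → Set (S × S)}
    (hps : ∀ κ, esysValid (K := K) (ps κ) (pres κ) (Rs κ) (Gs κ) (psts κ))
    (hpre : ∀ κ, pre ⊆ pres κ) (hG : ∀ κ, Gs κ ⊆ G) (hR : ∀ κ, R ⊆ Rs κ)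
    (hGR : ∀ κ κ', κ ≠ κ' → Gs κ ⊆ Rs κ') :
    pesValid ps pre R G pst := by
  refine pesValid_iff.2 fun s x hs => validAt_of_invariant
    (fun c : PConf L S K =>
      ∀ κ, ValidAt esstepAny esysFin (Rs κ) (Gs κ) (psts κ) (c.1 κ, c.2))
    (fun _ _ _ h hR' κ => (h κ).env (hR κ hR')) ?_ (fun _ _ => False.elim)
    fun κ => esysValid_iff.1 (hps κ) s x (hpre κ hs)
  rintro ⟨_, s, x⟩ _ h ⟨⟨t, κ₁⟩, ⟨hs⟩⟩
  obtain ⟨hG₁, h₁⟩ := (h κ₁).step ⟨_, hs⟩ hs.fst_ne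
  refine ⟨hG κ₁ hG₁, fun κ => ?_⟩
  rcases eq_or_ne κ κ₁ with rfl | hκ
  · simpa only [Function.update_self] using h₁
  · simp only [Function.update_of_ne hκ]
    exact (h κ).env (hGR κ₁ κ hκ.symm hG₁)

end EventRules

/-- **Soundness of the PiCore rely-guarantee proof system**: every specification
(program, event, event system, or parallel event system) derivable in the proof
system is valid. -/
theorem rg_proof_system_soundness {L S K : Type} [DecidableEq K]
    (sp : Spec L S K) (pre pst : Set S) (R G : Set (S × S))
    (h : RGDeriv sp pre R G pst) :
    RGValid sp pre R G pst := by
  induction h with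
  | basic hpst hG hpre hpst' => exact progValid_basic hpst hG hpre hpst'
  | seq _ _ ihP ihQ => exact progValid_seq ihP ihQ
  | cond _ _ hpre hid ih₁ ih₂ => exact progValid_cond ih₁ ih₂ hpre hid
  | whileR _ hpst hpre hpst' hid ih => exact progValid_while ih hpst hpre hpst' hid
  | awaitR _ hpre hpst ih => exact progValid_await ih hpre hpst
  | nondt hpst hG hpre hpst' => exact progValid_nondt hpst hG hpre hpst'
  | conseq _ hpre hR hG hpst _ ih => exact ih.mono hpre hR hG hpst
  | unPre _ _ ih ih' => exact progValid_union ih ih'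
  | intPost _ _ ih ih' => exact progValid_inter ih ih'
  | univPre _ ih => exact progValid_of_forall_singleton ih
  | emptyPre => exact progValid_empty
  | inner _ ih => exact evtValid_anony ih
  | basicEvt _ hpre hid ih => exact evtValid_basic ih hpre hid
  | evtSeq _ _ ihe ih𝒮 => exact esysValid_seq ihe ih𝒮
  | evtSet _ hpsts hpre _ hR hG _ _ ih => exact esysValid_set ih hpsts hpre hR hG
  | par _ hpre _ hG hR hGR ih => exact pesValid_par ih hpre hG hR hGR

end PiCore
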